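/- arXiv:1803.05948 — 4 statements merged into one kernel-verified Lean document; each statement's English description precedes it below -/
import Mathlib

section
/- (Continuous master theorem, case 3.) Let N ∈ ℕ and for each n ≥ N let (w_{n,j})_{0≤j<n} be nonnegative reals. Let F : ℕ → ℝ satisfy F_n = t_n + Σ_{j=0}^{n−1} w_{n,j}·F_j for all n ≥ N, where t_n ~ K·n^a·(ln n)^β as n → ∞ for constants K ≠ 0, a ≥ 0, β > −1. Assume there is a measurable shape function w : [0,1] → ℝ_{≥0} with ∫_0^1 w(z) dz ≥ 1 and Σ_{j=0}^{n−1} |w_{n,j} − ∫_{j/n}^{(j+1)/n} w(z) dz| = O(n^{−d}) for some constant d > 0. If 1 − ∫_0^1 z^a·w(z) dz < 0, then F_n = O(n^c) for the unique real c with ∫_0^1 z^c·w(z) dz = 1. -/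
/-
Choose `c'` with `max a (c - d) < c' < c`. Then `φ n = n ^ c - n ^ c'` is a strict supersolution
of the homogeneous recurrence: comparing the weights with Riemann sums of `∫ z ^ e * w z`, one gets
`∑ j, W n j * j ^ c ≤ n ^ c * (1 + O(n ^ (-d)))` (left Riemann sums of the increasing `z ^ c`
underestimate the integral) and `∑ j, W n j * j ^ c' ≥ (1 + 2 γ) * n ^ c'` for some `γ > 0`
(because `∫ z ^ c' * w z > ∫ z ^ c * w z = 1`). As `c' > c - d` and `c' > a`, both the error term
and the toll `T n` are `o(n ^ c')`, so the gain `γ * n ^ c'` absorbs them and strong induction gives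
`|F n| ≤ C * φ n ≤ C * n ^ c`.
-/

open MeasureTheory Filter Real Finset Topology Asymptotics

lemma sum_mul_abs_le_of_forall_Ico_le {F φ W : ℕ → ℝ} {B C : ℝ} {M n : ℕ} (hMn : M ≤ n)
    (hW : ∀ j < n, 0 ≤ W j ∧ W j ≤ B) (hC : 0 ≤ C) (hF : ∀ j ∈ Ico M n, |F j| ≤ C * φ j) :
    ∑ j ∈ range n, W j * |F j| ≤
      B * ∑ j ∈ range M, |F j| + C * (∑ j ∈ range n, W j * φ j + B * ∑ j ∈ range M, |φ j|) := by
  have hWM : ∀ j ∈ range M, 0 ≤ W j ∧ W j ≤ B := fun j hj =>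
    hW j ((mem_range.1 hj).trans_le hMn)
  have hhead : ∑ j ∈ range M, W j * |F j| ≤ B * ∑ j ∈ range M, |F j| := by
    rw [mul_sum]
    exact sum_le_sum fun j hj => mul_le_mul_of_nonneg_right (hWM j hj).2 (abs_nonneg _)
  have htail : ∑ j ∈ Ico M n, W j * |F j| ≤ C * ∑ j ∈ Ico M n, W j * φ j := by
    rw [mul_sum]
    refine sum_le_sum fun j hj => ?_
    calc W j * |F j| ≤ W j * (C * φ j) :=
          mul_le_mul_of_nonneg_left (hF j hj) (hW j (mem_Ico.1 hj).2).1
      _ = C * (W j * φ j) := by ring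
  have hφhead : -∑ j ∈ range M, W j * φ j ≤ B * ∑ j ∈ range M, |φ j| := by
    rw [← sum_neg_distrib, mul_sum]
    refine sum_le_sum fun j hj => ?_
    calc -(W j * φ j) ≤ W j * |φ j| := by
          rw [← mul_neg]; exact mul_le_mul_of_nonneg_left (neg_le_abs _) (hWM j hj).1
      _ ≤ B * |φ j| := mul_le_mul_of_nonneg_right (hWM j hj).2 (abs_nonneg _)
  rw [← sum_range_add_sum_Ico _ hMn, ← sum_range_add_sum_Ico (fun j => W j * φ j) hMn]
  nlinarith [mul_le_mul_of_nonneg_left hφhead hC]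

lemma abs_add_sum_mul_le {ι : Type*} (s : Finset ι) (t : ℝ) {W x : ι → ℝ}
    (hW : ∀ i ∈ s, 0 ≤ W i) : |t + ∑ i ∈ s, W i * x i| ≤ |t| + ∑ i ∈ s, W i * |x i| := by
  refine (abs_add_le _ _).trans (add_le_add_right ((abs_sum_le_sum_abs _ _).trans_eq ?_) _)
  exact sum_congr rfl fun i hi => by rw [abs_mul, abs_of_nonneg (hW i hi)]

theorem isBigO_of_supersolution {F T φ q : ℕ → ℝ} {W : ℕ → ℕ → ℝ} {B γ : ℝ} (hγ : 0 < γ)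
    (hq : Tendsto q atTop atTop) (hT : T =O[atTop] q) (hφ : ∀ᶠ n in atTop, 0 < φ n)
    (hW : ∀ᶠ n in atTop, ∀ j < n, 0 ≤ W n j ∧ W n j ≤ B)
    (hF : ∀ᶠ n in atTop, F n = T n + ∑ j ∈ range n, W n j * F j)
    (hsuper : ∀ᶠ n in atTop, ∑ j ∈ range n, W n j * φ j + γ * q n ≤ φ n) :
    F =O[atTop] φ := by
  obtain ⟨A, hA0, hA⟩ := hT.exists_pos
  obtain ⟨M, hM⟩ := eventually_atTop.1 <|
    hφ.and <| hW.and <| hF.and <| hsuper.and <| hA.bound.and <| hq.eventually_ge_atTop 1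
  set S := ∑ j ∈ range M, |F j|
  set Φ := ∑ j ∈ range M, |φ j|
  have hS : 0 ≤ S := sum_nonneg fun j _ => abs_nonneg _
  obtain ⟨M', hM'⟩ := eventually_atTop.1 (hq.eventually_ge_atTop (2 * (|B| * Φ) / γ))
  set C := max (2 * (A + |B| * S) / γ) (∑ m ∈ Ico M M', |F m| / φ m)
  have hCmax : 2 * (A + |B| * S) / γ ≤ C := le_max_left _ _
  have hC0 : 0 ≤ C := le_trans (by positivity) hCmax
  have hC : A + |B| * S ≤ C * (γ / 2) := by
    rw [div_le_iff₀ hγ] at hCmax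
    linarith
  suffices key : ∀ n ≥ M, |F n| ≤ C * φ n by
    refine IsBigO.of_bound C (eventually_atTop.2 ⟨M, fun n hn => ?_⟩)
    rw [norm_eq_abs, norm_eq_abs, abs_of_pos (hM n hn).1]
    exact key n hn
  intro n
  induction n using Nat.strong_induction_on with
  | _ n ih =>
  intro hn
  obtain ⟨hφn, hWn, hFn, hsupern, hTn, hqn⟩ := hM n hn
  by_cases hnM' : n < M'
  · refine (div_le_iff₀ hφn).1 (le_trans ?_ (le_max_right _ _))
    exact single_le_sum (f := fun m => |F m| / φ m)
      (fun m hm => div_nonneg (abs_nonneg _) (hM m (mem_Ico.1 hm).1).1.le) (mem_Ico.2 ⟨hn, hnM'⟩)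
  have hrec := hFn ▸ abs_add_sum_mul_le (range n) (T n) fun j hj => (hWn j (mem_range.1 hj)).1
  have hsum := sum_mul_abs_le_of_forall_Ico_le hn hWn hC0
    fun j hj => ih j (mem_Ico.1 hj).2 (mem_Ico.1 hj).1
  rw [norm_eq_abs, norm_eq_abs, abs_of_pos (show 0 < q n by linarith)] at hTn
  have hBΦ : B * Φ ≤ γ / 2 * q n := by
    have := (div_le_iff₀' hγ).1 (hM' n (by omega))
    nlinarith [le_abs_self B, sum_nonneg fun j (_ : j ∈ range M) => abs_nonneg (φ j)]
  have hBS : B * S ≤ |B| * S * q n := by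
    nlinarith [mul_le_mul_of_nonneg_right (le_abs_self B) hS, mul_nonneg (abs_nonneg B) hS]
  nlinarith [mul_le_mul_of_nonneg_left hBΦ hC0, mul_le_mul_of_nonneg_left hsupern hC0,
    mul_le_mul_of_nonneg_right hC (show 0 ≤ q n by linarith)]

noncomputable def cellIntegral (f : ℝ → ℝ) (n j : ℕ) : ℝ :=
  ∫ z in (j : ℝ) / n..((j : ℝ) + 1) / n, f z

lemma div_le_add_one_div (n j : ℕ) : (j : ℝ) / n ≤ ((j : ℝ) + 1) / n :=
  div_le_div_of_nonneg_right (by linarith) n.cast_nonneg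

lemma Icc_cell_subset {n j : ℕ} (hj : j < n) :
    Set.Icc ((j : ℝ) / n) (((j : ℝ) + 1) / n) ⊆ Set.Icc 0 1 := by
  have hn : (0 : ℝ) < n := by exact_mod_cast (Nat.zero_le j).trans_lt hj
  refine Set.Icc_subset_Icc (by positivity) ((div_le_one hn).2 ?_)
  exact_mod_cast hj

lemma IntervalIntegrable.mono_cell {f : ℝ → ℝ} (hf : IntervalIntegrable f volume 0 1) {n j : ℕ}
    (hj : j < n) : IntervalIntegrable f volume ((j : ℝ) / n) (((j : ℝ) + 1) / n) := by
  refine hf.mono_set ?_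
  rw [Set.uIcc_of_le (div_le_add_one_div n j), Set.uIcc_of_le zero_le_one]
  exact Icc_cell_subset hj

lemma sum_cellIntegral {f : ℝ → ℝ} (hf : IntervalIntegrable f volume 0 1) {n : ℕ} (hn : n ≠ 0) :
    ∑ j ∈ range n, cellIntegral f n j = ∫ z in (0 : ℝ)..1, f z := by
  have key := intervalIntegral.sum_integral_adjacent_intervals (a := fun k : ℕ => (k : ℝ) / n)
    (μ := volume) fun k hk => by simpa using hf.mono_cell hk
  simp only [Nat.cast_zero, zero_div, Nat.cast_add, Nat.cast_one] at key
  rwa [div_self (by exact_mod_cast hn)] at key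

section Riemann

variable {w g : ℝ → ℝ} (hw : IntervalIntegrable w volume 0 1)
  (hw0 : ∀ z ∈ Set.Icc (0 : ℝ) 1, 0 ≤ w z)

include hw

lemma integral_mul_sub_sum_mul_cellIntegral
    (hgw : IntervalIntegrable (fun z => g z * w z) volume 0 1) {n : ℕ} (hn : n ≠ 0) :
    (∫ z in (0 : ℝ)..1, g z * w z) - ∑ j ∈ range n, g (j / n) * cellIntegral w n j =
      ∑ j ∈ range n, ∫ z in (j : ℝ) / n..((j : ℝ) + 1) / n, (g z - g (j / n)) * w z := by
  rw [← sum_cellIntegral hgw hn, ← sum_sub_distrib]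
  refine sum_congr rfl fun j hj => ?_
  simp only [cellIntegral, sub_mul]
  rw [intervalIntegral.integral_sub (hgw.mono_cell (mem_range.1 hj))
    ((hw.mono_cell (mem_range.1 hj)).const_mul _), intervalIntegral.integral_const_mul]

include hw0

lemma sum_mul_cellIntegral_le_of_monotoneOn (hg : MonotoneOn g (Set.Icc 0 1))
    (hgw : IntervalIntegrable (fun z => g z * w z) volume 0 1) {n : ℕ} (hn : n ≠ 0) :
    ∑ j ∈ range n, g (j / n) * cellIntegral w n j ≤ ∫ z in (0 : ℝ)..1, g z * w z := by
  rw [← sub_nonneg, integral_mul_sub_sum_mul_cellIntegral hw hgw hn]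
  refine sum_nonneg fun j hj =>
    intervalIntegral.integral_nonneg (div_le_add_one_div n j) fun z hz => ?_
  have hcell := Icc_cell_subset (mem_range.1 hj)
  exact mul_nonneg (sub_nonneg.2 (hg (hcell ⟨le_rfl, div_le_add_one_div n j⟩) (hcell hz) hz.1))
    (hw0 z (hcell hz))

lemma abs_integral_mul_sub_sum_mul_cellIntegral_le {ε : ℝ} {n : ℕ} (hn : n ≠ 0)
    (hgw : IntervalIntegrable (fun z => g z * w z) volume 0 1)
    (hg : ∀ x ∈ Set.Icc (0 : ℝ) 1, ∀ y ∈ Set.Icc (0 : ℝ) 1, |x - y| ≤ 1 / n → |g x - g y| ≤ ε) :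
    |(∫ z in (0 : ℝ)..1, g z * w z) - ∑ j ∈ range n, g (j / n) * cellIntegral w n j| ≤
      ε * ∫ z in (0 : ℝ)..1, w z := by
  rw [integral_mul_sub_sum_mul_cellIntegral hw hgw hn, ← sum_cellIntegral hw hn, mul_sum]
  refine (abs_sum_le_sum_abs _ _).trans (sum_le_sum fun j hj => ?_)
  have hcell := Icc_cell_subset (mem_range.1 hj)
  rw [cellIntegral, ← intervalIntegral.integral_const_mul, ← norm_eq_abs]
  refine intervalIntegral.norm_integral_le_of_norm_le (div_le_add_one_div n j)
    (Eventually.of_forall fun z hz => ?_) ((hw.mono_cell (mem_range.1 hj)).const_mul ε)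
  have hz : z ∈ Set.Icc ((j : ℝ) / n) (((j : ℝ) + 1) / n) := Set.Ioc_subset_Icc_self hz
  have hdist : |z - j / n| ≤ 1 / n := by
    rw [abs_of_nonneg (sub_nonneg.2 hz.1)]
    linarith [hz.2, show ((j : ℝ) + 1) / n = j / n + 1 / n by ring]
  rw [norm_mul, norm_eq_abs, norm_eq_abs, abs_of_nonneg (hw0 z (hcell hz))]
  exact mul_le_mul_of_nonneg_right
    (hg z (hcell hz) _ (hcell ⟨le_rfl, div_le_add_one_div n j⟩) hdist) (hw0 z (hcell hz))

theorem tendsto_sum_mul_cellIntegral (hg : ContinuousOn g (Set.Icc 0 1)) :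
    Tendsto (fun n : ℕ => ∑ j ∈ range n, g (j / n) * cellIntegral w n j) atTop
      (𝓝 (∫ z in (0 : ℝ)..1, g z * w z)) := by
  have hgw : IntervalIntegrable (fun z => g z * w z) volume 0 1 :=
    hw.continuousOn_mul (by rwa [Set.uIcc_of_le zero_le_one])
  set I := ∫ z in (0 : ℝ)..1, w z
  have hI : 0 ≤ I := intervalIntegral.integral_nonneg zero_le_one hw0
  rw [Metric.tendsto_atTop]
  intro ε hε
  have hε' : 0 < ε / 2 / (I + 1) := by positivity
  obtain ⟨δ, hδ, hgδ⟩ := Metric.uniformContinuousOn_iff_le.1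
    (isCompact_Icc.uniformContinuousOn_of_continuous hg) _ hε'
  obtain ⟨N, hN⟩ := exists_nat_one_div_lt hδ
  refine ⟨N + 1, fun n hn => ?_⟩
  have hn0 : n ≠ 0 := by omega
  have hnδ : 1 / (n : ℝ) ≤ δ := by
    refine le_trans ?_ hN.le
    gcongr
    exact_mod_cast hn
  rw [dist_comm, dist_eq_norm]
  refine lt_of_le_of_lt (abs_integral_mul_sub_sum_mul_cellIntegral_le hw hw0 hn0 hgw
    fun x hx y hy hxy => hgδ x hx y hy (by rw [dist_eq_norm]; exact hxy.trans hnδ)) ?_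
  rw [div_div, div_mul_eq_mul_div, div_lt_iff₀ (by positivity)]
  nlinarith

end Riemann

lemma abs_sum_mul_sub_sum_mul_le {ι : Type*} (s : Finset ι) {g x y : ι → ℝ} {C : ℝ}
    (hg : ∀ i ∈ s, |g i| ≤ C) :
    |∑ i ∈ s, g i * x i - ∑ i ∈ s, g i * y i| ≤ C * ∑ i ∈ s, |x i - y i| := by
  rw [← sum_sub_distrib, mul_sum]
  refine (abs_sum_le_sum_abs _ _).trans (sum_le_sum fun i hi => ?_)
  rw [← mul_sub, abs_mul]
  exact mul_le_mul_of_nonneg_right (hg i hi) (abs_nonneg _)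

section Weights

variable {w g : ℝ → ℝ} {W : ℕ → ℕ → ℝ} (hw : IntervalIntegrable w volume 0 1)
  (hw0 : ∀ z ∈ Set.Icc (0 : ℝ) 1, 0 ≤ w z)

include hw hw0

theorem tendsto_sum_mul_of_tendsto_sum_abs_sub_cellIntegral (hg : ContinuousOn g (Set.Icc 0 1))
    (hW : Tendsto (fun n => ∑ j ∈ range n, |W n j - cellIntegral w n j|) atTop (𝓝 0)) :
    Tendsto (fun n : ℕ => ∑ j ∈ range n, g (j / n) * W n j) atTop
      (𝓝 (∫ z in (0 : ℝ)..1, g z * w z)) := by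
  obtain ⟨C, hC⟩ := isCompact_Icc.exists_bound_of_continuousOn hg
  have hdiff : Tendsto (fun n : ℕ => ∑ j ∈ range n, g (j / n) * W n j -
      ∑ j ∈ range n, g (j / n) * cellIntegral w n j) atTop (𝓝 0) := by
    refine squeeze_zero_norm (fun n => abs_sum_mul_sub_sum_mul_le _ fun j hj => ?_)
      (by simpa using hW.const_mul C)
    exact hC _ (Icc_cell_subset (mem_range.1 hj) ⟨le_rfl, div_le_add_one_div n j⟩)
  simpa using hdiff.add (tendsto_sum_mul_cellIntegral hw hw0 hg)

lemma sum_rpow_mul_le {e : ℝ} (he : 0 ≤ e) {n : ℕ} (hn : n ≠ 0) :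
    ∑ j ∈ range n, ((j : ℝ) / n) ^ e * W n j ≤
      (∫ z in (0 : ℝ)..1, z ^ e * w z) + ∑ j ∈ range n, |W n j - cellIntegral w n j| := by
  have hcell : ∀ j ∈ range n, |((j : ℝ) / n) ^ e| ≤ 1 := fun j hj => by
    obtain ⟨h0, h1⟩ := Icc_cell_subset (mem_range.1 hj) ⟨le_rfl, div_le_add_one_div n j⟩
    rw [abs_of_nonneg (rpow_nonneg h0 e)]
    exact rpow_le_one h0 h1 he
  have hsum := abs_sum_mul_sub_sum_mul_le (range n) hcell (x := W n) (y := cellIntegral w n)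
  have hRiemann := sum_mul_cellIntegral_le_of_monotoneOn hw hw0
    (fun x hx y _ hxy => rpow_le_rpow hx.1 hxy he)
    (hw.continuousOn_mul (continuous_rpow_const he).continuousOn) hn
  linarith [le_abs_self (∑ j ∈ range n, ((j : ℝ) / n) ^ e * W n j -
    ∑ j ∈ range n, ((j : ℝ) / n) ^ e * cellIntegral w n j)]

lemma eventually_weight_le
    (hW : Tendsto (fun n => ∑ j ∈ range n, |W n j - cellIntegral w n j|) atTop (𝓝 0))
    (hW0 : ∀ᶠ n in atTop, ∀ j < n, 0 ≤ W n j) :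
    ∀ᶠ n in atTop, ∀ j < n, 0 ≤ W n j ∧ W n j ≤ (∫ z in (0 : ℝ)..1, w z) + 1 := by
  have hsum := tendsto_sum_mul_of_tendsto_sum_abs_sub_cellIntegral hw hw0
    (continuousOn_const (c := (1 : ℝ))) hW
  simp only [one_mul] at hsum
  filter_upwards [hW0, hsum.eventually_le_const (lt_add_one _)] with n hn hle j hj
  exact ⟨hn j hj, (single_le_sum (fun k hk => hn k (mem_range.1 hk)) (mem_range.2 hj)).trans hle⟩

end Weights

section Mellin

variable {w : ℝ → ℝ} (hw0 : ∀ z ∈ Set.Icc (0 : ℝ) 1, 0 ≤ w z)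

lemma intervalIntegrable_rpow_mul (hw : IntervalIntegrable w volume 0 1) {e : ℝ} (he : 0 ≤ e) :
    IntervalIntegrable (fun z => z ^ e * w z) volume 0 1 :=
  hw.continuousOn_mul (continuous_rpow_const he).continuousOn

include hw0

lemma integral_rpow_mul_anti {e₁ e₂ : ℝ} (h : e₁ ≤ e₂)
    (h₁ : IntervalIntegrable (fun z => z ^ e₁ * w z) volume 0 1)
    (h₂ : IntervalIntegrable (fun z => z ^ e₂ * w z) volume 0 1) :
    ∫ z in (0 : ℝ)..1, z ^ e₂ * w z ≤ ∫ z in (0 : ℝ)..1, z ^ e₁ * w z := by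
  refine intervalIntegral.integral_mono_on_of_le_Ioo zero_le_one h₂ h₁ fun z hz => ?_
  exact mul_le_mul_of_nonneg_right (rpow_le_rpow_of_exponent_ge hz.1 hz.2.le h)
    (hw0 z (Set.Ioo_subset_Icc_self hz))

lemma integral_rpow_mul_strictAnti {e₁ e₂ : ℝ} (h : e₁ < e₂)
    (h₁ : IntervalIntegrable (fun z => z ^ e₁ * w z) volume 0 1)
    (h₂ : IntervalIntegrable (fun z => z ^ e₂ * w z) volume 0 1)
    (hw : 0 < ∫ z in (0 : ℝ)..1, w z) :
    ∫ z in (0 : ℝ)..1, z ^ e₂ * w z < ∫ z in (0 : ℝ)..1, z ^ e₁ * w z := by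
  have hIoc : ∀ᵐ z ∂volume.restrict (Set.uIoc (0 : ℝ) 1), z ∈ Set.Ioc (0 : ℝ) 1 := by
    filter_upwards [ae_restrict_mem measurableSet_uIoc] with z hz
    rwa [Set.uIoc_of_le zero_le_one] at hz
  have hsupp_w : 0 < volume (Function.support w ∩ Set.Ioc 0 1) :=
    ((intervalIntegral.integral_pos_iff_support_of_nonneg_ae'
      (hIoc.mono fun z hz => hw0 z (Set.Ioc_subset_Icc_self hz))
      (intervalIntegral.intervalIntegrable_of_integral_ne_zero hw.ne')).1 hw).2
  have hsupp : (Function.support w ∩ Set.Ioc 0 1) \ {1} ⊆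
      Function.support (fun z => z ^ e₁ * w z - z ^ e₂ * w z) ∩ Set.Ioc 0 1 := by
    rintro z ⟨⟨hwz, hz⟩, hz1⟩
    refine ⟨?_, hz⟩
    rw [Function.mem_support, ← sub_mul]
    exact mul_ne_zero (sub_pos.2 (rpow_lt_rpow_of_exponent_gt hz.1
      (lt_of_le_of_ne hz.2 hz1) h)).ne' hwz
  rw [← sub_pos, ← intervalIntegral.integral_sub h₁ h₂]
  refine (intervalIntegral.integral_pos_iff_support_of_nonneg_ae' ?_ (h₁.sub h₂)).2
    ⟨zero_lt_one, ?_⟩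
  · filter_upwards [hIoc] with z hz
    rw [Pi.zero_apply, ← sub_mul]
    exact mul_nonneg (sub_nonneg.2 (rpow_le_rpow_of_exponent_ge hz.1 hz.2 h.le))
      (hw0 z (Set.Ioc_subset_Icc_self hz))
  · rw [← measure_sdiff_null (measure_singleton 1)] at hsupp_w
    exact hsupp_w.trans_le (measure_mono hsupp)
end Mellin

lemma isLittleO_rpow_mul_log_rpow (β : ℝ) {a e : ℝ} (h : a < e) :
    (fun x : ℝ => x ^ a * log x ^ β) =o[atTop] fun x => x ^ e := by
  refine ((isBigO_refl (fun x : ℝ => x ^ a) atTop).mul_isLittleO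
    (isLittleO_log_rpow_rpow_atTop β (sub_pos.2 h))).congr' EventuallyEq.rfl ?_
  filter_upwards [eventually_gt_atTop 0] with x hx
  rw [← rpow_add hx, add_sub_cancel]

lemma isLittleO_natCast_rpow_of_tendsto_div {T : ℕ → ℝ} {K a β e : ℝ} (h : a < e)
    (hT : Tendsto (fun n : ℕ => T n / (K * (n : ℝ) ^ a * log n ^ β)) atTop (𝓝 1)) :
    T =o[atTop] fun n : ℕ => (n : ℝ) ^ e := by
  refine (isEquivalent_of_tendsto_one (v := fun n : ℕ => K * (n : ℝ) ^ a * log n ^ β)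
    hT).trans_isLittleO ?_
  simpa only [mul_assoc, Function.comp_def] using ((isLittleO_rpow_mul_log_rpow β h).comp_tendsto
    tendsto_natCast_atTop_atTop).const_mul_left K

lemma sum_mul_natCast_rpow (W : ℕ → ℝ) {n : ℕ} (hn : n ≠ 0) (e : ℝ) :
    ∑ j ∈ range n, W j * (j : ℝ) ^ e = (n : ℝ) ^ e * ∑ j ∈ range n, ((j : ℝ) / n) ^ e * W j := by
  have hn' : (0 : ℝ) < (n : ℝ) ^ e := rpow_pos_of_pos (by exact_mod_cast Nat.pos_of_ne_zero hn) e
  rw [mul_sum]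
  refine sum_congr rfl fun j _ => ?_
  rw [div_rpow j.cast_nonneg n.cast_nonneg]
  field_simp

lemma eventually_sum_mul_rpow_sub_rpow_le {W : ℕ → ℕ → ℝ} {c c' d E γ : ℝ} (hcd : c - d < c')
    (hγ : 0 < γ)
    (hup : ∀ᶠ n : ℕ in atTop, ∑ j ∈ range n, ((j : ℝ) / n) ^ c * W n j ≤ 1 + E * (n : ℝ) ^ (-d))
    (hlow : ∀ᶠ n : ℕ in atTop, 1 + 2 * γ ≤ ∑ j ∈ range n, ((j : ℝ) / n) ^ c' * W n j) :
    ∀ᶠ n : ℕ in atTop, ∑ j ∈ range n, W n j * ((j : ℝ) ^ c - (j : ℝ) ^ c') + γ * (n : ℝ) ^ c' ≤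
      (n : ℝ) ^ c - (n : ℝ) ^ c' := by
  have hE : ∀ᶠ n : ℕ in atTop, ‖E * (n : ℝ) ^ (c - d)‖ ≤ γ * ‖(n : ℝ) ^ c'‖ :=
    (((isLittleO_rpow_mul_log_rpow 0 hcd).comp_tendsto tendsto_natCast_atTop_atTop).const_mul_left
      E).bound hγ |>.mono fun n hn => by simpa using hn
  filter_upwards [hup, hlow, hE, eventually_gt_atTop 0] with n hup hlow hE hn
  have hn' : (0 : ℝ) < n := by exact_mod_cast hn
  simp only [mul_sub, sum_sub_distrib, sum_mul_natCast_rpow _ hn.ne']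
  rw [norm_eq_abs, norm_eq_abs, abs_of_pos (rpow_pos_of_pos hn' c')] at hE
  have hsplit : (n : ℝ) ^ c * (E * (n : ℝ) ^ (-d)) = E * (n : ℝ) ^ (c - d) := by
    rw [sub_eq_add_neg, rpow_add hn']; ring
  nlinarith [mul_le_mul_of_nonneg_left hup (rpow_pos_of_pos hn' c).le,
    mul_le_mul_of_nonneg_left hlow (rpow_pos_of_pos hn' c').le, le_abs_self (E * (n : ℝ) ^ (c - d))]

lemma tendsto_zero_of_le_mul_rpow_neg {u : ℕ → ℝ} {E d : ℝ} {M : ℕ} (hd : 0 < d)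
    (hu0 : ∀ n, 0 ≤ u n) (hu : ∀ n ≥ M, u n ≤ E * (n : ℝ) ^ (-d)) : Tendsto u atTop (𝓝 0) :=
  squeeze_zero' (Eventually.of_forall hu0) (eventually_atTop.2 ⟨M, hu⟩) (by
    simpa using ((tendsto_rpow_neg_atTop hd).comp tendsto_natCast_atTop_atTop).const_mul E)

lemma lt_of_integral_rpow_mul_eq_one {w : ℝ → ℝ} (hw0 : ∀ z ∈ Set.Icc (0 : ℝ) 1, 0 ≤ w z)
    (hw : IntervalIntegrable w volume 0 1) {a c : ℝ} (ha : 0 ≤ a)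
    (hc : ∫ z in (0 : ℝ)..1, z ^ c * w z = 1) (hac : 1 < ∫ z in (0 : ℝ)..1, z ^ a * w z) :
    a < c := by
  by_contra! hca
  have hcInt : IntervalIntegrable (fun z => z ^ c * w z) volume 0 1 :=
    intervalIntegral.intervalIntegrable_of_integral_ne_zero (by rw [hc]; exact one_ne_zero)
  linarith [integral_rpow_mul_anti hw0 hca hcInt (intervalIntegrable_rpow_mul hw ha)]

lemma exists_eventually_supersolution {w : ℝ → ℝ} {W : ℕ → ℕ → ℝ} {c c' d E : ℝ} {M : ℕ}
    (hw : IntervalIntegrable w volume 0 1) (hw0 : ∀ z ∈ Set.Icc (0 : ℝ) 1, 0 ≤ w z)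
    (hwpos : 0 < ∫ z in (0 : ℝ)..1, w z) (hc : ∫ z in (0 : ℝ)..1, z ^ c * w z = 1)
    (hc' : 0 ≤ c') (hc'c : c' < c) (hcd : c - d < c')
    (hE : ∀ n ≥ M, ∑ j ∈ range n, |W n j - cellIntegral w n j| ≤ E * (n : ℝ) ^ (-d))
    (herr : Tendsto (fun n => ∑ j ∈ range n, |W n j - cellIntegral w n j|) atTop (𝓝 0)) :
    ∃ γ > 0, ∀ᶠ n : ℕ in atTop,
      ∑ j ∈ range n, W n j * ((j : ℝ) ^ c - (j : ℝ) ^ c') + γ * (n : ℝ) ^ c' ≤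
        (n : ℝ) ^ c - (n : ℝ) ^ c' := by
  have hI := integral_rpow_mul_strictAnti hw0 hc'c (intervalIntegrable_rpow_mul hw hc')
    (intervalIntegrable_rpow_mul hw (hc'.trans hc'c.le)) hwpos
  rw [hc] at hI
  set γ := ((∫ z in (0 : ℝ)..1, z ^ c' * w z) - 1) / 3 with hγ
  refine ⟨γ, by positivity, eventually_sum_mul_rpow_sub_rpow_le (E := E) hcd (by positivity) ?_ ?_⟩
  · filter_upwards [eventually_ge_atTop M, eventually_ne_atTop 0] with n hn hn0
    have := sum_rpow_mul_le hw hw0 (hc'.trans hc'c.le) hn0 (W := W)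
    rw [hc] at this
    linarith [hE n hn]
  · exact (tendsto_sum_mul_of_tendsto_sum_abs_sub_cellIntegral hw hw0
      (continuous_rpow_const hc').continuousOn herr).eventually_const_le (by linarith)

theorem isBigO_rpow_of_supersolution {F T : ℕ → ℝ} {W : ℕ → ℕ → ℝ} {B γ c c' : ℝ} (hγ : 0 < γ)
    (hc' : 0 < c') (hc'c : c' < c) (hT : T =O[atTop] fun n : ℕ => (n : ℝ) ^ c')
    (hW : ∀ᶠ n in atTop, ∀ j < n, 0 ≤ W n j ∧ W n j ≤ B)
    (hF : ∀ᶠ n in atTop, F n = T n + ∑ j ∈ range n, W n j * F j)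
    (hsuper : ∀ᶠ n : ℕ in atTop, ∑ j ∈ range n, W n j * ((j : ℝ) ^ c - (j : ℝ) ^ c') +
      γ * (n : ℝ) ^ c' ≤ (n : ℝ) ^ c - (n : ℝ) ^ c') :
    F =O[atTop] fun n : ℕ => (n : ℝ) ^ c := by
  have hφ : ∀ᶠ n : ℕ in atTop, 0 < (n : ℝ) ^ c - (n : ℝ) ^ c' := by
    filter_upwards [eventually_gt_atTop 1] with n hn
    exact sub_pos.2 (rpow_lt_rpow_of_exponent_lt (by exact_mod_cast hn) hc'c)
  refine (isBigO_of_supersolution hγ ((tendsto_rpow_atTop hc').comp tendsto_natCast_atTop_atTop)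
    hT hφ hW hF hsuper).trans (IsBigO.of_bound 1 ?_)
  filter_upwards [hφ] with n hn
  have := rpow_nonneg n.cast_nonneg c'
  rw [one_mul, norm_of_nonneg hn.le, norm_of_nonneg (by linarith)]
  linarith

theorem cmt_case3_general (N : ℕ) (W : ℕ → ℕ → ℝ) (F T : ℕ → ℝ) (K a β d : ℝ) (w : ℝ → ℝ)
    (hWnn : ∀ n ≥ N, ∀ j < n, 0 ≤ W n j)
    (hF : ∀ n ≥ N, F n = T n + ∑ j ∈ Finset.range n, W n j * F j)
    (ha : 0 ≤ a)
    (hT : Filter.Tendsto (fun n : ℕ => T n / (K * (n : ℝ) ^ a * Real.log n ^ β))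
      Filter.atTop (nhds 1))
    (hwnn : ∀ z ∈ Set.Icc (0:ℝ) 1, 0 ≤ w z)
    (hwint : 1 ≤ ∫ z in (0:ℝ)..1, w z)
    (hd : 0 < d)
    (happrox : ∃ C : ℝ, ∃ M : ℕ, ∀ n ≥ M,
      (∑ j ∈ Finset.range n,
        |W n j - ∫ z in (j : ℝ) / n..((j : ℝ) + 1) / n, w z|) ≤ C * (n : ℝ) ^ (-d))
    (hH : 1 - ∫ z in (0:ℝ)..1, z ^ a * w z < 0) :
    ∀ c : ℝ, (∫ z in (0:ℝ)..1, z ^ c * w z) = 1 →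
      ∃ C : ℝ, ∃ M : ℕ, ∀ n ≥ M, |F n| ≤ C * (n : ℝ) ^ c := by
  intro c hc
  have hw : 0 < ∫ z in (0:ℝ)..1, w z := by linarith
  have hwInt := intervalIntegral.intervalIntegrable_of_integral_ne_zero hw.ne'
  have hac := lt_of_integral_rpow_mul_eq_one hwnn hwInt ha hc (by linarith)
  obtain ⟨c', hc'lo, hc'c⟩ := exists_between (max_lt hac (sub_lt_self c hd))
  have hc'a : a < c' := (le_max_left _ _).trans_lt hc'lo
  obtain ⟨E, M, hE⟩ : ∃ E, ∃ M : ℕ, ∀ n ≥ M,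
      ∑ j ∈ range n, |W n j - cellIntegral w n j| ≤ E * (n : ℝ) ^ (-d) := happrox
  have herr := tendsto_zero_of_le_mul_rpow_neg hd (fun n => sum_nonneg fun j _ => abs_nonneg _) hE
  obtain ⟨γ, hγ, hsuper⟩ := exists_eventually_supersolution hwInt hwnn hw hc
    (ha.trans hc'a.le) hc'c ((le_max_right _ _).trans_lt hc'lo) hE herr
  obtain ⟨C, hC⟩ := (isBigO_rpow_of_supersolution hγ (ha.trans_lt hc'a) hc'c
    (isLittleO_natCast_rpow_of_tendsto_div hc'a hT).isBigO
    (eventually_weight_le hwInt hwnn herr (eventually_atTop.2 ⟨N, hWnn⟩))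
    (eventually_atTop.2 ⟨N, hF⟩) hsuper).bound
  obtain ⟨M', hM'⟩ := eventually_atTop.1 hC
  exact ⟨C, M', fun n hn => by simpa [abs_of_nonneg (rpow_nonneg n.cast_nonneg c)] using hM' n hn⟩

/-- **Roura's Continuous Master Theorem, case 3.** If `F n = t n + ∑_{j<n} w_{n,j} F j` for
`n ≥ N` with nonnegative weights, `t n ~ K n^a (ln n)^β`, a shape function `w` with
`∫_0^1 w ≥ 1` approximating the weights at rate `O(n^{-d})`, and
`H = 1 − ∫_0^1 z^a w(z) dz < 0`, then `F n = O(n^c)` for the unique `c` with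
`∫_0^1 z^c w(z) dz = 1`. -/
theorem cmt_case3 (N : ℕ) (W : ℕ → ℕ → ℝ) (F T : ℕ → ℝ) (K a β d : ℝ) (w : ℝ → ℝ)
    (hWnn : ∀ n ≥ N, ∀ j < n, 0 ≤ W n j)
    (hF : ∀ n ≥ N, F n = T n + ∑ j ∈ Finset.range n, W n j * F j)
    (hK : K ≠ 0) (ha : 0 ≤ a) (hβ : -1 < β)
    (hT : Filter.Tendsto (fun n : ℕ => T n / (K * (n : ℝ) ^ a * Real.log n ^ β))
      Filter.atTop (nhds 1))
    (hwmeas : Measurable w) (hwnn : ∀ z ∈ Set.Icc (0:ℝ) 1, 0 ≤ w z)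
    (hwint : 1 ≤ ∫ z in (0:ℝ)..1, w z)
    (hd : 0 < d)
    (happrox : ∃ C : ℝ, ∃ M : ℕ, ∀ n ≥ M,
      (∑ j ∈ Finset.range n,
        |W n j - ∫ z in (j : ℝ) / n..((j : ℝ) + 1) / n, w z|) ≤ C * (n : ℝ) ^ (-d))
    (hH : 1 - ∫ z in (0:ℝ)..1, z ^ a * w z < 0) :
    ∀ c : ℝ, (∫ z in (0:ℝ)..1, z ^ c * w z) = 1 →
      ∃ C : ℝ, ∃ M : ℕ, ∀ n ≥ M, |F n| ≤ C * (n : ℝ) ^ c :=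
  cmt_case3_general N W F T K a β d w hWnn hF ha hT hwnn hwint hd happrox hH
end

section
/- Let c_1, c_2 ∈ ℕ be fixed constants and let α, β ≥ 1 be integers. For n > c_1 let J = c_2 + I where I ~ BetaBin(n−c_1, α, β). Then for every fixed h ∈ (0,1), E[(J/n)·ln(J/n)] = (α/(α+β))·(H_α − H_{α+β}) ± O(n^{−h}) as n → ∞, where the convention 0·ln 0 = 0 is used. -/
open scoped Classical

/-- The beta function `B(a,b) = ∫_0^1 z^(a-1) (1-z)^(b-1) dz`. -/
noncomputable def betaFun (a b : ℝ) : ℝ := ∫ z in (0:ℝ)..1, z ^ (a - 1) * (1 - z) ^ (b - 1)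

/-- The regularized incomplete beta function `I_{x,y}(a,b)`. -/
noncomputable def regIncBeta (x y a b : ℝ) : ℝ :=
  (∫ z in x..y, z ^ (a - 1) * (1 - z) ^ (b - 1)) / betaFun a b

/-- The probability `P(I = i)` for `I ~ BetaBin(n,a,b)`. -/
noncomputable def betaBinPMF (n : ℕ) (a b : ℝ) (i : ℕ) : ℝ :=
  (n.choose i : ℝ) * betaFun (a + i) (b + ((n - i : ℕ) : ℝ)) / betaFun a b

/-- The `m`-th harmonic number. -/
noncomputable def harm (m : ℕ) : ℝ := ∑ i ∈ Finset.range m, (1 : ℝ) / (i + 1)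

/-!
`I ~ BetaBin(m, α, β)` counts the draws of the first colour in the first `m` draws of a Pólya urn
started with `α` and `β` balls. The function `harmXLogX p q = p/(p+q) · (H_p - H_{p+q})` of the
urn contents is a martingale for the urn dynamics, so its mean after `m` draws is exactly its
initial value `α/(α+β) · (H_α - H_{α+β})`. On the other hand `H_{p+q} - H_p = log ((p+q)/p)
+ O(1/p)`, so `harmXLogX p q = y log y + O(1/(p+q))` with `y = p/(p+q)`, and `y` differs from `J/n`
by `O(1/n)`. As `t log t` has slope `O(log n)` on the relevant range, every term of the expectation
is within `O(log n / n) = O(n^{-h})` of the corresponding term of the martingale.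
-/

open Real Finset

theorem betaFun_eq_beta {a b : ℝ} (ha : 0 < a) (hb : 0 < b) :
    betaFun a b = ProbabilityTheory.beta a b := by
  rw [ProbabilityTheory.beta_eq_betaIntegralReal a b ha hb, Complex.betaIntegral,
    ← Complex.ofReal_re (betaFun a b), betaFun, ← intervalIntegral.integral_ofReal]
  refine congrArg Complex.re (intervalIntegral.integral_congr fun x hx => ?_)
  rw [Set.uIcc_of_le zero_le_one] at hx
  push_cast
  rw [Complex.ofReal_cpow hx.1, Complex.ofReal_cpow (sub_nonneg.2 hx.2)]
  push_cast
  rfl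

theorem betaFun_pos {a b : ℝ} (ha : 0 < a) (hb : 0 < b) : 0 < betaFun a b :=
  betaFun_eq_beta ha hb ▸ ProbabilityTheory.beta_pos ha hb

theorem betaFun_nonneg (a b : ℝ) : 0 ≤ betaFun a b :=
  intervalIntegral.integral_nonneg zero_le_one fun _ hz =>
    mul_nonneg (rpow_nonneg hz.1 _) (rpow_nonneg (sub_nonneg.2 hz.2) _)

theorem betaFun_add_one_left {a b : ℝ} (ha : 0 < a) (hb : 0 < b) :
    betaFun (a + 1) b = a / (a + b) * betaFun a b := by
  rw [betaFun_eq_beta (by linarith) hb, betaFun_eq_beta ha hb, ProbabilityTheory.beta,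
    ProbabilityTheory.beta, add_right_comm, Gamma_add_one ha.ne', Gamma_add_one (by positivity)]
  have := Gamma_pos_of_pos (add_pos ha hb)
  field_simp

theorem betaFun_comm (a b : ℝ) : betaFun a b = betaFun b a := by
  have := intervalIntegral.integral_comp_sub_left (a := 0) (b := 1)
    (fun z : ℝ => z ^ (b - 1) * (1 - z) ^ (a - 1)) (1 : ℝ)
  simp only [sub_sub_cancel, sub_self, sub_zero] at this
  rw [betaFun, betaFun, ← this]
  simp only [mul_comm]

theorem betaFun_add_one_right {a b : ℝ} (ha : 0 < a) (hb : 0 < b) :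
    betaFun a (b + 1) = b / (a + b) * betaFun a b := by
  rw [betaFun_comm, betaFun_add_one_left hb ha, add_comm b, betaFun_comm]

theorem betaBinPMF_nonneg (n : ℕ) (a b : ℝ) (i : ℕ) : 0 ≤ betaBinPMF n a b i :=
  div_nonneg (mul_nonneg (Nat.cast_nonneg _) (betaFun_nonneg _ _)) (betaFun_nonneg _ _)

section PolyaUrn

variable {a b : ℝ} {φ : ℕ → ℕ → ℝ}

/- The hypothesis `hφ` below says that `φ i r` is the mean of `φ` after one more draw from a Pólya
urn holding `a + i` and `b + r` balls, i.e. that `φ` is a martingale along the urn. -/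

theorem betaFun_mul_add_betaFun_mul_of_polya (ha : 0 < a) (hb : 0 < b)
    (hφ : ∀ i r : ℕ, (a + b + (i + r)) * φ i r = (a + i) * φ (i + 1) r + (b + r) * φ i (r + 1))
    (i r : ℕ) :
    betaFun (a + i) (b + (r + 1 : ℕ)) * φ i (r + 1) + betaFun (a + (i + 1 : ℕ)) (b + r) * φ (i + 1) r
      = betaFun (a + i) (b + r) * φ i r := by
  have hai : 0 < a + i := by positivity
  have hbr : 0 < b + r := by positivity
  have hsum : a + i + (b + r) ≠ 0 := by positivity
  push_cast
  rw [← add_assoc, ← add_assoc, betaFun_add_one_left hai hbr, betaFun_add_one_right hai hbr]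
  have := hφ i r
  field_simp
  linear_combination -betaFun (a + i) (b + r) * this

theorem sum_choose_mul_betaFun_mul_of_polya (ha : 0 < a) (hb : 0 < b)
    (hφ : ∀ i r : ℕ, (a + b + (i + r)) * φ i r = (a + i) * φ (i + 1) r + (b + r) * φ i (r + 1))
    (m : ℕ) :
    ∑ i ∈ range (m + 1), (m.choose i : ℝ) * (betaFun (a + i) (b + (m - i : ℕ)) * φ i (m - i))
      = betaFun a b * φ 0 0 := by
  induction m with
  | zero => simp
  | succ m ih =>
    rw [sum_choose_succ_mul (fun i r => betaFun (a + i) (b + r) * φ i r), ← ih,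
      ← sum_add_distrib]
    refine sum_congr rfl fun i hi => ?_
    rw [Nat.sub_add_comm (Nat.lt_succ_iff.1 (mem_range.1 hi)), ← mul_add,
      betaFun_mul_add_betaFun_mul_of_polya ha hb hφ]

theorem sum_betaBinPMF_mul_of_polya (ha : 0 < a) (hb : 0 < b)
    (hφ : ∀ i r : ℕ, (a + b + (i + r)) * φ i r = (a + i) * φ (i + 1) r + (b + r) * φ i (r + 1))
    (m : ℕ) :
    ∑ i ∈ range (m + 1), betaBinPMF m a b i * φ i (m - i) = φ 0 0 := by
  have hB := (betaFun_pos ha hb).ne'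
  simp_rw [betaBinPMF, div_mul_eq_mul_div, ← sum_div, mul_assoc,
    sum_choose_mul_betaFun_mul_of_polya ha hb hφ, mul_div_cancel_left₀ _ hB]

theorem sum_betaBinPMF (ha : 0 < a) (hb : 0 < b) (m : ℕ) :
    ∑ i ∈ range (m + 1), betaBinPMF m a b i = 1 := by
  simpa using sum_betaBinPMF_mul_of_polya (φ := fun _ _ => 1) ha hb (fun _ _ => by ring) m

theorem abs_sum_betaBinPMF_mul_le (ha : 0 < a) (hb : 0 < b) {m : ℕ} {d : ℕ → ℝ} {E : ℝ}
    (hd : ∀ i ≤ m, |d i| ≤ E) :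
    |∑ i ∈ range (m + 1), betaBinPMF m a b i * d i| ≤ E := by
  calc |∑ i ∈ range (m + 1), betaBinPMF m a b i * d i|
      ≤ ∑ i ∈ range (m + 1), betaBinPMF m a b i * E := by
        refine (abs_sum_le_sum_abs _ _).trans (sum_le_sum fun i hi => ?_)
        rw [abs_mul, abs_of_nonneg (betaBinPMF_nonneg _ _ _ _)]
        exact mul_le_mul_of_nonneg_left (hd i (Nat.lt_succ_iff.1 (mem_range.1 hi)))
          (betaBinPMF_nonneg _ _ _ _)
    _ = E := by rw [← sum_mul, sum_betaBinPMF ha hb, one_mul]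

end PolyaUrn

noncomputable def harmXLogX (p q : ℕ) : ℝ := (p : ℝ) / ((p : ℝ) + (q : ℝ)) * (harm p - harm (p + q))

theorem harm_eq_harmonic (m : ℕ) : harm m = harmonic m := by
  simp [harm, harmonic]

theorem abs_harm_sub_harm_sub_log_le {p s : ℕ} (hp : 1 ≤ p) (hps : p ≤ s) :
    |(harm s - harm p) - (log s - log p)| ≤ 1 / p := by
  obtain ⟨p, rfl⟩ := Nat.exists_eq_add_of_le' hp
  obtain ⟨s, rfl⟩ := Nat.exists_eq_add_of_le' (hp.trans hps)
  have hupper := strictAnti_eulerMascheroniSeq'.antitone hps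
  have hlower := strictMono_eulerMascheroniSeq.monotone (Nat.succ_le_succ_iff.1 hps)
  simp only [eulerMascheroniSeq', Nat.add_one_ne_zero, if_false] at hupper
  simp only [eulerMascheroniSeq] at hlower
  simp only [harm_eq_harmonic, harmonic_succ] at hupper hlower ⊢
  push_cast at hupper hlower ⊢
  simp only [one_div]
  have : 0 ≤ ((s : ℝ) + 1)⁻¹ := by positivity
  rw [abs_le]
  constructor <;> linarith

theorem add_mul_harmXLogX (p q : ℕ) :
    ((p : ℝ) + q) * harmXLogX p q = p * harmXLogX (p + 1) q + q * harmXLogX p (q + 1) := by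
  rcases Nat.eq_zero_or_pos p with rfl | hp
  · simp [harmXLogX]
  have hpq : (0 : ℝ) < p + q := by positivity
  simp only [harmXLogX, Nat.add_right_comm p 1 q, ← add_assoc, harm, sum_range_succ]
  push_cast
  field_simp
  ring

theorem abs_harmXLogX_sub_mul_log_le {p : ℕ} (hp : 1 ≤ p) (q : ℕ) :
    |harmXLogX p q - (p / (p + q) : ℝ) * log (p / (p + q))| ≤ 1 / (p + q) := by
  have hp' : (0 : ℝ) < p := by exact_mod_cast hp
  have hs : (0 : ℝ) < p + q := by positivity
  have key := abs_harm_sub_harm_sub_log_le hp (Nat.le_add_right p q)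
  push_cast at key
  have e : harmXLogX p q - (p / (p + q) : ℝ) * log (p / (p + q))
      = -(p / (p + q) * ((harm (p + q) - harm p) - (log (p + q) - log p))) := by
    rw [harmXLogX, log_div hp'.ne' hs.ne']
    ring
  calc |harmXLogX p q - (p / (p + q) : ℝ) * log (p / (p + q))|
      = p / (p + q) * |(harm (p + q) - harm p) - (log (p + q) - log p)| := by
        rw [e, abs_neg, abs_mul, abs_of_pos (div_pos hp' hs)]
    _ ≤ p / (p + q) * (1 / p) := by gcongr
    _ = 1 / (p + q) := by field_simp

theorem sum_betaBinPMF_mul_harmXLogX {α β : ℕ} (hα : 1 ≤ α) (hβ : 1 ≤ β) (m : ℕ) :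
    ∑ i ∈ range (m + 1), betaBinPMF m α β i * harmXLogX (α + i) (β + (m - i)) = harmXLogX α β :=
  sum_betaBinPMF_mul_of_polya (φ := fun i r => harmXLogX (α + i) (β + r))
    (Nat.cast_pos.2 hα) (Nat.cast_pos.2 hβ)
    (fun i r => by
      have := add_mul_harmXLogX (α + i) (β + r)
      push_cast at this
      linear_combination this) m

theorem abs_mul_log_sub_mul_log_le {u v L : ℝ} (hu : 0 ≤ u) (hv : 0 ≤ v) (hLu : |log u| ≤ L)
    (hLv : |log v| ≤ L) : |u * log u - v * log v| ≤ |u - v| * (1 + L) := by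
  wlog hvu : v ≤ u generalizing u v
  · rw [abs_sub_comm, abs_sub_comm u]
    exact this hv hu hLv hLu (le_of_not_ge hvu)
  have hmid : 0 ≤ v * (log u - log v) ∧ v * (log u - log v) ≤ u - v := by
    rcases hv.eq_or_lt with rfl | hv0
    · simpa using hvu
    have hu0 := hv0.trans_le hvu
    refine ⟨mul_nonneg hv (sub_nonneg.2 (log_le_log hv0 hvu)), ?_⟩
    calc v * (log u - log v) = v * log (u / v) := by rw [log_div hu0.ne' hv0.ne']
      _ ≤ v * (u / v - 1) := mul_le_mul_of_nonneg_left (log_le_sub_one_of_pos (by positivity)) hv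
      _ = u - v := by field_simp
  have huv := sub_nonneg.2 hvu
  calc |u * log u - v * log v| = |(u - v) * log u + v * (log u - log v)| := by ring_nf
    _ ≤ (u - v) * |log u| + v * (log u - log v) := by
        refine (abs_add_le _ _).trans_eq ?_
        rw [abs_mul, abs_of_nonneg huv, abs_of_nonneg hmid.1]
    _ ≤ (u - v) * L + (u - v) := add_le_add (mul_le_mul_of_nonneg_left hLu huv) hmid.2
    _ = |u - v| * (1 + L) := by rw [abs_of_nonneg huv]; ring

theorem abs_log_natCast_div_le {k m : ℕ} {c : ℝ} (hc : 1 ≤ c) (hk : (k : ℝ) ≤ c * m) :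
    |log (k / m)| ≤ log (c * m) := by
  rcases Nat.eq_zero_or_pos m with rfl | hm
  · simp
  have hm1 : (1 : ℝ) ≤ m := by exact_mod_cast hm
  have hcm : (m : ℝ) ≤ c * m := le_mul_of_one_le_left (by positivity) hc
  rcases Nat.eq_zero_or_pos k with rfl | hk0
  · simpa using log_nonneg (hm1.trans hcm)
  have hk1 : (1 : ℝ) ≤ k := by exact_mod_cast hk0
  rw [log_div (by positivity) (by positivity)]
  exact abs_sub_le_of_nonneg_of_le (log_nonneg hk1) (log_le_log (by positivity) hk)
    (log_nonneg hm1) (log_le_log (by positivity) hcm)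

theorem abs_add_div_sub_add_div_le {c d i n s : ℝ} (hc : 0 ≤ c) (hd : 0 ≤ d) (hi : 0 ≤ i)
    (hin : i ≤ n) (hn : 0 < n) (hns : n ≤ 2 * s) :
    |(c + i) / n - (d + i) / s| ≤ (c + 2 * d + 2 * |s - n|) / n := by
  have hs : 0 < s := by linarith
  have hs' : 1 / s ≤ 2 / n := by rw [div_le_div_iff₀ hs hn]; linarith
  calc |(c + i) / n - (d + i) / s| = |c / n - d / s + i / n * ((s - n) / s)| := by
        congr 1; field_simp; ring
    _ ≤ c / n + d / s + i / n * (|s - n| / s) := by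
        refine (abs_add_le _ _).trans (add_le_add ((abs_sub _ _).trans_eq ?_) (le_of_eq ?_))
        · rw [abs_of_nonneg (by positivity), abs_of_nonneg (by positivity)]
        · rw [abs_mul, abs_of_nonneg (by positivity : 0 ≤ i / n), abs_div, abs_of_pos hs]
    _ ≤ c / n + d * (2 / n) + 1 * (|s - n| * (2 / n)) := by
        have hin' : i / n ≤ 1 := (div_le_one hn).2 hin
        simp only [div_eq_mul_one_div d s, div_eq_mul_one_div |s - n| s]
        gcongr
    _ = (c + 2 * d + 2 * |s - n|) / n := by ring

theorem add_mul_log_div_le_mul_rpow {A B ε x : ℝ} (hA : 0 ≤ A) (hB : 0 ≤ B) (hε : 0 < ε)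
    (hx : 1 ≤ x) : (A + B * log x) / x ≤ (A + B / ε) * x ^ (ε - 1) := by
  have hx0 : 0 < x := one_pos.trans_le hx
  have h1 : 1 ≤ x ^ ε := one_le_rpow hx hε.le
  have hlog : log x ≤ x ^ ε / ε := log_le_rpow_div hx0.le hε
  rw [rpow_sub_one hx0.ne', ← mul_div_assoc, div_le_div_iff_of_pos_right hx0]
  calc A + B * log x ≤ A * x ^ ε + B * (x ^ ε / ε) := by gcongr; nlinarith
    _ = (A + B / ε) * x ^ ε := by ring

theorem abs_mul_log_sub_harmXLogX_le {α β c₁ c₂ n i : ℕ} (hα : 1 ≤ α)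
    (hn : α + β + 2 * c₁ + c₂ ≤ n) (hi : i ≤ n - c₁) :
    |((c₂ + i : ℕ) : ℝ) / n * log (((c₂ + i : ℕ) : ℝ) / n)
        - harmXLogX (α + i) (β + (n - c₁ - i))|
      ≤ ((c₂ + 4 * α + 2 * β + 2 * c₁) * (1 + log (2 * n)) + 2) / n := by
  obtain ⟨p, hp⟩ : ∃ p, p = α + i := ⟨_, rfl⟩
  obtain ⟨q, hq⟩ : ∃ q, q = β + (n - c₁ - i) := ⟨_, rfl⟩
  rw [← hp, ← hq]
  have hn1 : (1 : ℝ) ≤ n := by exact_mod_cast (show 1 ≤ n by omega)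
  have hpR : (p : ℝ) = α + i := by rw [hp]; push_cast; ring
  have hsR : (p : ℝ) + q = α + β + n - c₁ := by
    have : p + q + c₁ = α + β + n := by omega
    linarith [show ((p + q + c₁ : ℕ) : ℝ) = α + β + n by rw [this]; push_cast; ring,
      show ((p + q + c₁ : ℕ) : ℝ) = p + q + c₁ by push_cast; ring]
  have hc₁ : (2 * c₁ : ℝ) ≤ n := by exact_mod_cast (show 2 * c₁ ≤ n by omega)
  have hc₂ : (c₂ + i : ℝ) ≤ 2 * n := by exact_mod_cast (show c₂ + i ≤ 2 * n by omega)
  have hαβ : (α + β : ℝ) ≤ n := by exact_mod_cast (show α + β ≤ n by omega)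
  have hp1 : (1 : ℝ) ≤ p := by exact_mod_cast (show 1 ≤ p by omega)
  have hlog : 0 ≤ log (2 * n) := log_nonneg (by linarith)
  have hxy : |((c₂ : ℝ) + i) / n - p / (p + q)| ≤ (c₂ + 4 * α + 2 * β + 2 * c₁) / n := by
    have habs : |((p : ℝ) + q) - n| ≤ α + β + c₁ := by
      rw [hsR, abs_le]; constructor <;> linarith [(Nat.cast_nonneg c₁ : (0 : ℝ) ≤ c₁)]
    rw [hpR] at habs ⊢
    refine (abs_add_div_sub_add_div_le (by positivity) (by positivity) (by positivity)
      (by exact_mod_cast (show i ≤ n by omega)) (by positivity) (by linarith)).trans ?_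
    exact div_le_div_of_nonneg_right (by linarith) (by positivity)
  have hLy : |log (p / (p + q : ℝ))| ≤ log (2 * n) := by
    have := abs_log_natCast_div_le (k := p) (m := p + q) le_rfl (by push_cast; linarith)
    rw [one_mul, Nat.cast_add] at this
    exact this.trans (log_le_log (by linarith) (by linarith))
  have hLx := abs_log_natCast_div_le (k := c₂ + i) (m := n) one_le_two (by push_cast; linarith)
  have hterm := abs_mul_log_sub_mul_log_le (by positivity) (by positivity) hLx hLy
  have happrox := abs_harmXLogX_sub_mul_log_le (show 1 ≤ p by omega) q
  have hinv : 1 / ((p : ℝ) + q) ≤ 2 / n := by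
    rw [div_le_div_iff₀ (by linarith) (by positivity)]; linarith
  push_cast at hterm ⊢
  calc _ ≤ |((c₂ : ℝ) + i) / n * log ((c₂ + i) / n) - p / (p + q) * log (p / (p + q))|
        + |p / (p + q) * log (p / (p + q)) - harmXLogX p q| := abs_sub_le _ _ _
    _ ≤ (c₂ + 4 * α + 2 * β + 2 * c₁) / n * (1 + log (2 * n)) + 2 / n :=
        add_le_add (hterm.trans (mul_le_mul_of_nonneg_right hxy (by linarith)))
          ((abs_sub_comm _ _).trans_le (happrox.trans hinv))
    _ = _ := by ring

theorem E_Jn_ln_Jn_general (c₁ c₂ α β : ℕ) (hα : 1 ≤ α) (hβ : 1 ≤ β)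
    (h : ℝ) (h1 : h < 1) :
    ∃ C : ℝ, ∃ N : ℕ, ∀ n ≥ N,
      |(∑ i ∈ Finset.range (n - c₁ + 1),
          betaBinPMF (n - c₁) (α : ℝ) (β : ℝ) i *
            ((((c₂ + i : ℕ) : ℝ) / n) * Real.log (((c₂ + i : ℕ) : ℝ) / n)))
        - ((α : ℝ) / ((α : ℝ) + (β : ℝ))) * (harm α - harm (α + β))|
      ≤ C * (n : ℝ) ^ (-h) := by
  set K : ℝ := c₂ + 4 * α + 2 * β + 2 * c₁
  have hK : 0 ≤ K := by positivity
  refine ⟨K * (1 + log 2) + 2 + K / (1 - h), α + β + 2 * c₁ + c₂, fun n hn => ?_⟩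
  have hn1 : (1 : ℝ) ≤ n := by exact_mod_cast (show 1 ≤ n by omega)
  rw [← harmXLogX, ← sum_betaBinPMF_mul_harmXLogX hα hβ, ← sum_sub_distrib]
  simp_rw [← mul_sub]
  calc _ ≤ (K * (1 + log (2 * n)) + 2) / n :=
        abs_sum_betaBinPMF_mul_le (by positivity) (by positivity) fun i hi =>
          abs_mul_log_sub_harmXLogX_le hα hn hi
    _ = (K * (1 + log 2) + 2 + K * log n) / n := by
        rw [log_mul two_ne_zero (by positivity)]; ring
    _ ≤ (K * (1 + log 2) + 2 + K / (1 - h)) * (n : ℝ) ^ (1 - h - 1) :=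
        add_mul_log_div_le_mul_rpow (by positivity) hK (by linarith) hn1
    _ = _ := by rw [sub_sub_cancel_left]

/-- **Lemma (E-Jn-ln-Jn).** For `J = c₂ + I`, `I ~ BetaBin(n−c₁, α, β)` with integers
`α, β ≥ 1` and any fixed `h ∈ (0,1)`,
`E[(J/n)·ln(J/n)] = (α/(α+β))·(H_α − H_{α+β}) ± O(n^{−h})`
(with the convention `0·ln 0 = 0`, which holds since `Real.log 0 = 0`). -/
theorem E_Jn_ln_Jn (c₁ c₂ α β : ℕ) (hα : 1 ≤ α) (hβ : 1 ≤ β)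
    (h : ℝ) (h0 : 0 < h) (h1 : h < 1) :
    ∃ C : ℝ, ∃ N : ℕ, ∀ n ≥ N,
      |(∑ i ∈ Finset.range (n - c₁ + 1),
          betaBinPMF (n - c₁) (α : ℝ) (β : ℝ) i *
            ((((c₂ + i : ℕ) : ℝ) / n) * Real.log (((c₂ + i : ℕ) : ℝ) / n)))
        - ((α : ℝ) / ((α : ℝ) + (β : ℝ))) * (harm α - harm (α + β))|
      ≤ C * (n : ℝ) ^ (-h) :=
  E_Jn_ln_Jn_general c₁ c₂ α β hα hβ h h1
end

section
/- Let h(x) = x·lg x + (1−x)·lg(1−x) for x ∈ (0,1), and define q : (0,1) → ℝ by q(ρ) = (1 + h(ρ))/(1−ρ) if ρ ∈ (1/3,1/2) ∪ (2/3,1), and q(ρ) = (1 + h(ρ))/ρ otherwise. Then q attains a strict minimum at ρ = 1/2: q(1/2) = 0, and q(ρ) > 0 for every ρ ∈ (0,1) with ρ ≠ 1/2. -/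
open scoped Classical

/-- The negative binary entropy `h(x) = x·lg x + (1−x)·lg(1−x)`. -/
noncomputable def negEntropy (x : ℝ) : ℝ :=
  x * Real.logb 2 x + (1 - x) * Real.logb 2 (1 - x)

/-- The QuickMergesort penalty `q(ρ)` for exact `ρ`-quantile pivots (buffer `α = 1/2`). -/
noncomputable def qPenalty (ρ : ℝ) : ℝ :=
  if (1/3 < ρ ∧ ρ < 1/2) ∨ (2/3 < ρ ∧ ρ < 1) then (1 + negEntropy ρ) / (1 - ρ)
  else (1 + negEntropy ρ) / ρ

/-! `1 + h(ρ)` is one bit minus the binary entropy of `ρ` in bits, so it vanishes at `ρ = 1/2`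
and is positive elsewhere, since the entropy is maximal exactly there. Both denominators of
`q` are positive on `(0,1)`. -/

open Real

lemma one_add_negEntropy_eq (x : ℝ) :
    1 + negEntropy x = (log 2 - binEntropy x) / log 2 := by
  have hlog2 : log 2 ≠ 0 := (log_pos one_lt_two).ne'
  simp only [negEntropy, binEntropy, logb, log_inv]
  field_simp
  ring

lemma one_add_negEntropy_half : 1 + negEntropy (1/2) = 0 := by
  rw [one_add_negEntropy_eq, one_div, binEntropy_two_inv, sub_self, zero_div]

lemma one_add_negEntropy_pos {x : ℝ} (hx : x ≠ 1/2) : 0 < 1 + negEntropy x := by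
  rw [one_add_negEntropy_eq]
  refine div_pos ?_ (log_pos one_lt_two)
  exact sub_pos.2 (binEntropy_lt_log_two.2 (by rwa [← one_div]))

lemma qPenalty_eq_zero {ρ : ℝ} (h : 1 + negEntropy ρ = 0) : qPenalty ρ = 0 := by
  simp only [qPenalty, h, zero_div, ite_self]

lemma qPenalty_pos {ρ : ℝ} (hρ : 0 < ρ) (h : 0 < 1 + negEntropy ρ) : 0 < qPenalty ρ := by
  unfold qPenalty
  split_ifs with hbranch
  · obtain ⟨-, hlt⟩ | ⟨-, hlt⟩ := hbranch <;> exact div_pos h (by linarith)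
  · exact div_pos h hρ

/-- **Skewed pivots are a pessimization for QuickMergesort:** the penalty `q` attains a
strict minimum at `ρ = 1/2`, i.e. `q(1/2) = 0` and `q(ρ) > 0` for all `ρ ∈ (0,1)`,
`ρ ≠ 1/2`. -/
theorem qPenalty_strict_min :
    qPenalty (1/2) = 0 ∧
      ∀ ρ : ℝ, 0 < ρ → ρ < 1 → ρ ≠ 1/2 → 0 < qPenalty ρ :=
  ⟨qPenalty_eq_zero one_add_negEntropy_half,
    fun _ hρ _ hne => qPenalty_pos hρ (one_add_negEntropy_pos hne)⟩
end

section
/- For every integer n ≥ 2, n·(⌊lg n⌋ − 1) + 2·(n − 2^{⌊lg n⌋}) ≤ n·lg n + (1 − 1/ln 2 − lg(2·ln 2))·n. (The constant 1 − 1/ln 2 − lg(2 ln 2) ≈ −0.913929 is the supremum of the periodic linear-term function, so the left-hand side, the comparison count of the sort-down phase of external Heapsort, is at most n·lg n − 0.913929·n.) -/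
/-!
Write `lg n = k + t` with `k = ⌊lg n⌋` and `t ∈ [0, 1)`, so that `2 ^ k = n · 2 ^ (-t)`. The
left-hand side then equals `n lg n + n (1 - t - 2 ^ (1 - t))`, and the constant on the right is the
maximum of `1 - t - 2 ^ (1 - t)` over all real `t`.
-/

open Real

/-- The tangent-line bound `ln y ≤ y - 1` at `y = 2 ^ (1 - t) ln 2`; equality holds where
`2 ^ (1 - t) = 1 / ln 2`. -/
lemma one_div_log_two_add_logb_two_mul_log_two_le (t : ℝ) :
    1 / log 2 + logb 2 (2 * log 2) ≤ t + (2 : ℝ) ^ (1 - t) := by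
  have hlog2 : 0 < log 2 := log_pos one_lt_two
  have htangent := log_le_sub_one_of_pos (x := (2 : ℝ) ^ (1 - t) * log 2) (by positivity)
  rw [log_mul (by positivity) hlog2.ne', log_rpow two_pos] at htangent
  rw [logb_mul two_ne_zero hlog2.ne', logb_self_eq_one one_lt_two, logb]
  have hdiv : log (log 2) / log 2 ≤ (2 : ℝ) ^ (1 - t) - 1 / log 2 - (1 - t) := by
    rw [div_le_iff₀ hlog2]
    field_simp
    linarith
  linarith

lemma mul_rpow_one_sub_fract_logb {x : ℝ} (hx : 0 < x) :
    x * (2 : ℝ) ^ (1 - (logb 2 x - ⌊logb 2 x⌋)) = 2 * (2 : ℝ) ^ ⌊logb 2 x⌋ := by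
  rw [sub_sub_eq_add_sub, rpow_sub two_pos, rpow_logb two_pos (by norm_num) hx,
    rpow_add two_pos, rpow_one, rpow_intCast]
  field_simp

/-- **Upper bound for the sort-down phase of external Heapsort:** for every `n ≥ 2`,
`n·(⌊lg n⌋ − 1) + 2·(n − 2^⌊lg n⌋) ≤ n·lg n + (1 − 1/ln 2 − lg(2·ln 2))·n`. -/
theorem external_heapsort_bound (n : ℕ) (hn : 2 ≤ n) :
    (n : ℝ) * ((⌊Real.logb 2 n⌋ : ℝ) - 1)
        + 2 * ((n : ℝ) - (2 : ℝ) ^ (⌊Real.logb 2 n⌋ : ℤ))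
      ≤ (n : ℝ) * Real.logb 2 n
        + (1 - 1 / Real.log 2 - Real.logb 2 (2 * Real.log 2)) * n := by
  have hn0 : (0 : ℝ) < n := by exact_mod_cast (by omega : 0 < n)
  have hmin := one_div_log_two_add_logb_two_mul_log_two_le (logb 2 n - ⌊logb 2 n⌋)
  have hscaled := mul_le_mul_of_nonneg_left hmin hn0.le
  linarith [mul_rpow_one_sub_fract_logb hn0]
end
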